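/- Let Π be a rank-1 Hermitian projector on ℂ⁴ and Λ = diag(iσ₂, iσ₂). Then Π cannot satisfy Π* = Λ Π Λ⁻¹; equivalently, if Π = u u†/(u†u) with u ≠ 0, the condition u u† (entrywise conjugated) = Λ (u u†) Λ⁻¹ up to normalization forces Π = 0, a contradiction. -/
import Mathlib


open Matrix Complex

noncomputable def sigma2 : Matrix (Fin 2) (Fin 2) ℂ := !![0, -Complex.I; Complex.I, 0]

noncomputable def Lam : Matrix (Fin 4) (Fin 4) ℂ :=
  Matrix.reindex finSumFinEquiv finSumFinEquiv
    (Matrix.fromBlocks (Complex.I • sigma2) 0 0 (Complex.I • sigma2))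

lemma lam_eq : Lam = !![0, 1, 0, 0; -1, 0, 0, 0; 0, 0, 0, 1; 0, 0, -1, 0] := by
  ext i j
  fin_cases i <;> fin_cases j <;>
    simp [Lam, sigma2, Matrix.fromBlocks, finSumFinEquiv, Fin.addCases, Fin.castLT, Fin.subNat,
      Matrix.vecHead, Matrix.vecTail, Complex.ext_iff,
      show ((3:Fin 4):ℕ) = 3 from rfl]

lemma lam_mul_lam : Lam * Lam = -1 := by
  rw [lam_eq]
  ext i j
  fin_cases i <;> fin_cases j <;>
    simp [Matrix.mul_apply, Fin.sum_univ_four, Matrix.one_apply, Matrix.vecHead, Matrix.vecTail]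

lemma lam_inv : Lam⁻¹ = -Lam := by
  apply Matrix.inv_eq_right_inv
  rw [Matrix.mul_neg, lam_mul_lam]; simp

lemma lam_transpose : Lamᵀ = -Lam := by
  rw [lam_eq]
  ext i j
  fin_cases i <;> fin_cases j <;>
    simp [Matrix.vecHead, Matrix.vecTail]

theorem stmt_12 (P : Matrix (Fin 4) (Fin 4) ℂ)
    (hproj : P * P = P) (hherm : Pᴴ = P) (hrank : P.rank = 1) :
    ¬ (P.map (starRingEnd ℂ) = Lam * P * Lam⁻¹) := by
  intro h
  -- P.map conj = Pᵀ
  have hmap : P.map (starRingEnd ℂ) = Pᵀ := by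
    conv_lhs => rw [← hherm]
    ext i j
    simp [Matrix.conjTranspose_apply]
  rw [hmap, lam_inv] at h
  -- M := P * Lam is antisymmetric
  set M : Matrix (Fin 4) (Fin 4) ℂ := P * Lam with hM
  have hanti : Mᵀ = -M := by
    have : Pᵀ = -(Lam * P * Lam) := by rw [h]; noncomm_ring
    calc Mᵀ = Lamᵀ * Pᵀ := by rw [hM, Matrix.transpose_mul]
    _ = (-Lam) * (-(Lam * P * Lam)) := by rw [lam_transpose, this]
    _ = (Lam * Lam) * P * Lam := by noncomm_ring
    _ = -M := by rw [lam_mul_lam, hM]; noncomm_ring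
  -- rank-1 decomposition of P
  have hr : Module.finrank ℂ (LinearMap.range P.mulVecLin) = 1 := hrank
  obtain ⟨⟨u, hu_mem⟩, hu0, hu⟩ := finrank_eq_one_iff'.mp hr
  have hcol : ∀ j, ∃ c : ℂ, ∀ i, P i j = c * u i := by
    intro j
    have hmem : P.mulVec (Pi.single j 1) ∈ LinearMap.range P.mulVecLin :=
      ⟨Pi.single j 1, rfl⟩
    obtain ⟨c, hc⟩ := hu ⟨_, hmem⟩
    have hc' : c • u = P.mulVec (Pi.single j 1) := congrArg Subtype.val hc
    refine ⟨c, fun i => ?_⟩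
    have := congrFun hc' i
    simpa [Matrix.mulVec, dotProduct, Pi.single_apply, mul_ite,
      Finset.sum_ite_eq'] using this.symm
  choose c hc using hcol
  -- entries of M
  have hMe : ∀ i j, M i j = u i * (∑ k, c k * Lam k j) := by
    intro i j
    rw [hM, Matrix.mul_apply]
    rw [Finset.mul_sum]
    congr 1; ext k
    rw [hc k i]; ring
  set d : Fin 4 → ℂ := fun j => ∑ k, c k * Lam k j with hd
  -- antisymmetry in terms of u, d
  have hud : ∀ i j, u j * d i = -(u i * d j) := by
    intro i j
    have := congrFun (congrFun hanti i) j
    simpa [Matrix.transpose_apply, hMe, hd] using this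
  have hzero : ∀ i j, u i * d j = 0 := by
    intro i j
    have h1 : u i * d i = 0 := by
      have := hud i i; linear_combination (this) / 2
    have h2 : u j * d j = 0 := by
      have := hud j j; linear_combination (this) / 2
    have hsq : (u i * d j) * (u j * d i) = (u i * d i) * (u j * d j) := by ring
    rw [h1, h2, hud i j] at hsq
    have : (u i * d j) ^ 2 = 0 := by linear_combination -hsq
    exact pow_eq_zero_iff (n := 2) (by norm_num) |>.mp this
  -- hence M = 0, so P = 0
  have hM0 : M = 0 := by
    ext i j; rw [hMe i j]; exact hzero i j
  have hP0 : P = 0 := by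
    have : P * (Lam * Lam) = 0 := by
      rw [← Matrix.mul_assoc, ← hM, hM0, Matrix.zero_mul]
    rw [lam_mul_lam] at this
    simpa using this
  rw [hP0] at hrank
  simp [Matrix.rank_zero] at hrank
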